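/- arXiv:2512.01138 — 2 statements merged into one kernel-verified Lean document; each statement's English description precedes it below -/
import Mathlib

section
/- Let V be a finite set, f, g : V → V, and v* ∈ V with ℓ_f(v*) ≥ 2. Then f is injective on V*: for all u, u′ ∈ V* with u ≠ u′ we have f(u) ≠ f(u′). -/
/-!
A child `c` of an expanding `u` satisfies `f (f c) = f u`. Since `f` lowers the level by exactly
one away from the periodic points, every child has level one more than its parent, so all points
of `V*` other than `v*` have level above `ℓ_f(v*) ≥ 2`, while `f a = f b` forces `a` and `b` to
have equal level once both levels are positive; hence nothing in `V*` collides with `v*` under `f`.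
A collision `f c = f c'` of two children gives `f p = f (f c) = f (f c') = f p'` for their
parents, so `p = p'` by induction, and the two children of one parent are told apart by
`f (R p) ≠ f (L p)`, which says that `f (g p)` is not a Nephew solution.
-/

/-- An element `v` is a *Nephew solution* for `(f, g)` if
`f (f (g v)) ≠ f v` or `f (g v) = v`. -/
def NephewSol {V : Type*} (f g : V → V) (v : V) : Prop :=
  f (f (g v)) ≠ f v ∨ f (g v) = v

/-- `w` is a periodic point of `f`: some positive iterate of `f` fixes `w`. -/
def NephewPeriodic {V : Type*} (f : V → V) (w : V) : Prop :=
  ∃ k : ℕ, 1 ≤ k ∧ f^[k] w = w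

/-- The *level* of `v`: the least `k ≥ 0` such that `f^[k] v` is a periodic point. -/
noncomputable def level {V : Type*} (f : V → V) (v : V) : ℕ :=
  sInf {k : ℕ | NephewPeriodic f (f^[k] v)}

/-- `u` *expands* if none of `u`, `g u`, `f (g u)`, `g (f (g u))` is a Nephew solution;
its children are then `L u = g u` and `R u = g (f (g u))`. -/
def Expands {V : Type*} (f g : V → V) (u : V) : Prop :=
  ¬ NephewSol f g u ∧ ¬ NephewSol f g (g u) ∧
  ¬ NephewSol f g (f (g u)) ∧ ¬ NephewSol f g (g (f (g u)))

/-- `V*`: the smallest subset of `V` containing `v*` and closed under taking the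
children `g u` and `g (f (g u))` of every expanding `u`. -/
inductive InVStar {V : Type*} (f g : V → V) (vstar : V) : V → Prop
  | base : InVStar f g vstar vstar
  | left {u : V} : InVStar f g vstar u → Expands f g u → InVStar f g vstar (g u)
  | right {u : V} : InVStar f g vstar u → Expands f g u → InVStar f g vstar (g (f (g u)))

section Level
variable {V : Type*} {f : V → V}

lemma NephewPeriodic.apply {w : V} (h : NephewPeriodic f w) : NephewPeriodic f (f w) := by
  obtain ⟨k, hk, hw⟩ := h
  exact ⟨k, hk, by rw [← Function.iterate_succ_apply, Function.iterate_succ_apply', hw]⟩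

-- With no periodic iterate both sides are the junk value `sInf ∅ = 0`.
lemma level_apply (v : V) : level f (f v) = level f v - 1 := by
  rcases Nat.eq_zero_or_pos (level f v) with h0 | hpos
  · rw [h0]
    refine Nat.sInf_eq_zero.2 ?_
    rcases Nat.sInf_eq_zero.1 h0 with hper | hempty
    · exact Or.inl hper.apply
    · exact Or.inr (Set.eq_empty_of_forall_notMem fun k hk =>
        Set.eq_empty_iff_forall_notMem.1 hempty (k + 1) hk)
  · exact Nat.eq_sub_of_add_eq (Nat.sInf_add (p := fun m => NephewPeriodic f (f^[m] v)) hpos)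

lemma level_eq_succ_of_apply_apply_eq {c u : V} (h : f (f c) = f u) (hu : 2 ≤ level f u) :
    level f c = level f u + 1 := by
  have hc := level_apply (f := f) (f c)
  rw [h, level_apply, level_apply] at hc
  omega

end Level

section VStar
variable {V : Type*} {f g : V → V} {vstar p c u : V}

def IsChild (f g : V → V) (p c : V) : Prop :=
  Expands f g p ∧ (c = g p ∨ c = g (f (g p)))

lemma Expands.isChild_left (hp : Expands f g p) : IsChild f g p (g p) := ⟨hp, .inl rfl⟩

lemma Expands.isChild_right (hp : Expands f g p) : IsChild f g p (g (f (g p))) := ⟨hp, .inr rfl⟩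

lemma not_nephewSol_iff {v : V} : ¬ NephewSol f g v ↔ f (f (g v)) = f v ∧ f (g v) ≠ v := by
  simp only [NephewSol, not_or, not_not]

lemma IsChild.apply_apply (hc : IsChild f g p c) : f (f c) = f p := by
  obtain ⟨hp, rfl | rfl⟩ := hc
  · exact (not_nephewSol_iff.1 hp.1).1
  · exact (not_nephewSol_iff.1 hp.2.2.1).1.trans (not_nephewSol_iff.1 hp.1).1

lemma IsChild.level_eq (hc : IsChild f g p c) (hp : 2 ≤ level f p) :
    level f c = level f p + 1 :=
  level_eq_succ_of_apply_apply_eq hc.apply_apply hp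

lemma IsChild.eq_of_apply_eq {c' : V} (hc : IsChild f g p c) (hc' : IsChild f g p c')
    (h : f c = f c') : c = c' := by
  have hLR := (not_nephewSol_iff.1 hc.1.2.2.1).2
  obtain ⟨-, rfl | rfl⟩ := hc <;> obtain ⟨-, rfl | rfl⟩ := hc'
  exacts [rfl, absurd h.symm hLR, absurd h hLR, rfl]

lemma InVStar.eq_or_isChild (hu : InVStar f g vstar u) :
    u = vstar ∨ ∃ p, InVStar f g vstar p ∧ IsChild f g p u := by
  cases hu with
  | base => exact .inl rfl
  | left hp hexp => exact .inr ⟨_, hp, hexp.isChild_left⟩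
  | right hp hexp => exact .inr ⟨_, hp, hexp.isChild_right⟩

lemma InVStar.level_ge (hv : 2 ≤ level f vstar) (hu : InVStar f g vstar u) :
    level f vstar ≤ level f u := by
  induction hu with
  | base => rfl
  | left _ hexp ih => rw [hexp.isChild_left.level_eq (by omega)]; omega
  | right _ hexp ih => rw [hexp.isChild_right.level_eq (by omega)]; omega

lemma IsChild.apply_ne_apply_vstar (hv : 2 ≤ level f vstar) (hp : InVStar f g vstar p)
    (hc : IsChild f g p c) : f c ≠ f vstar := by
  intro h
  have hpv := hp.level_ge hv
  have hcp := hc.level_eq (hv.trans hpv)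
  have hcv := congrArg (level f) h
  rw [level_apply, level_apply] at hcv
  omega

lemma IsChild.eq_of_apply_eq_of_mem_vStar (hv : 2 ≤ level f vstar) (hp : InVStar f g vstar p)
    (hc : IsChild f g p c) (ih : ∀ ⦃p'⦄, InVStar f g vstar p' → f p = f p' → p = p')
    ⦃u : V⦄ (hu : InVStar f g vstar u) (h : f c = f u) : c = u := by
  rcases hu.eq_or_isChild with rfl | ⟨p', hp', hc'⟩
  · exact absurd h (hc.apply_ne_apply_vstar hv hp)
  · obtain rfl : p = p' := ih hp' (by rw [← hc.apply_apply, ← hc'.apply_apply, h])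
    exact hc.eq_of_apply_eq hc' h

theorem injOn_vStar (hv : 2 ≤ level f vstar) : Set.InjOn f {u | InVStar f g vstar u} := by
  intro u hu
  induction hu with
  | base =>
    intro u hu h
    rcases hu.eq_or_isChild with rfl | ⟨p, hp, hc⟩
    · rfl
    · exact absurd h.symm (hc.apply_ne_apply_vstar hv hp)
  | left hp hexp ih => exact hexp.isChild_left.eq_of_apply_eq_of_mem_vStar hv hp ih
  | right hp hexp ih => exact hexp.isChild_right.eq_of_apply_eq_of_mem_vStar hv hp ih

end VStar

theorem f_injective_on_VStar_general {V : Type*} (f g : V → V) (vstar : V)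
    (hv : 2 ≤ level f vstar) :
    ∀ u u' : V, InVStar f g vstar u → InVStar f g vstar u' → u ≠ u' → f u ≠ f u' :=
  fun _ _ hu hu' hne h => hne (injOn_vStar hv hu hu' h)

/-- If `ℓ_f(v*) ≥ 2` then `f` is injective on `V*`. -/
theorem f_injective_on_VStar {V : Type*} [Finite V] (f g : V → V) (vstar : V)
    (hv : 2 ≤ level f vstar) :
    ∀ u u' : V, InVStar f g vstar u → InVStar f g vstar u' → u ≠ u' → f u ≠ f u' :=
  f_injective_on_VStar_general f g vstar hv
end

section
/- Let V be a finite set, f, g : V → V, and u ∈ V with ℓ_f(u) = 0 (that is, u is a periodic point of f). If u is not a Nephew solution for (f, g), then ℓ_f(g(u)) = 2. -/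
/-!
Since `u` is periodic, so is `f (f (g u)) = f u`. On the other hand `f` is injective on its
periodic points, so if `f (g u)` were periodic, `f (f (g u)) = f u` would force `f (g u) = u`.
Periodic points are forward invariant, so `g u` is not periodic either and its level is `2`.
-/

open Function Set

theorem Function.exists_iterate_mem_periodicPts {α : Type*} [Finite α] (f : α → α) (x : α) :
    ∃ n, f^[n] x ∈ periodicPts f := by
  obtain ⟨m, n, hne, heq⟩ := Finite.exists_ne_map_eq_of_infinite (f^[·] x)
  wlog hmn : m < n generalizing m n
  · exact this n m hne.symm heq.symm (by omega)
  refine ⟨m, mk_mem_periodicPts (Nat.sub_pos_of_lt hmn) ?_⟩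
  rw [IsPeriodicPt, IsFixedPt, ← iterate_add_apply, Nat.sub_add_cancel hmn.le, heq]

section Level

variable {V : Type*} {f : V → V} {v : V}

theorem level_eq_sInf : level f v = sInf {k | f^[k] v ∈ periodicPts f} :=
  rfl

theorem level_eq_zero_iff [Finite V] : level f v = 0 ↔ v ∈ periodicPts f := by
  obtain ⟨n, hn⟩ := exists_iterate_mem_periodicPts f v
  have hne : {k | f^[k] v ∈ periodicPts f}.Nonempty := ⟨n, hn⟩
  rw [level_eq_sInf, Nat.sInf_eq_zero, or_iff_left hne.ne_empty]
  rfl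

theorem level_eq_succ {n : ℕ} (hper : f^[n + 1] v ∈ periodicPts f)
    (hnot : f^[n] v ∉ periodicPts f) : level f v = n + 1 := by
  set S := {k | f^[k] v ∈ periodicPts f}
  have hmem : sInf S ∈ S := Nat.sInf_mem ⟨_, hper⟩
  rw [level_eq_sInf]
  refine le_antisymm (Nat.sInf_le hper) (Nat.succ_le_of_lt (not_le.1 fun hle => hnot ?_))
  rw [← Nat.sub_add_cancel hle, iterate_add_apply]
  exact (bijOn_periodicPts f).mapsTo.iterate _ hmem

end Level

/-- If `u` is a periodic point of `f` (level `0`) and `u` is not a Nephew solution,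
then `g u` has level exactly `2`. -/
theorem level_g_of_periodic {V : Type*} [Finite V] (f g : V → V) (u : V)
    (hu : level f u = 0) (hsol : ¬ NephewSol f g u) :
    level f (g u) = 2 := by
  obtain ⟨hffg, hfg⟩ : f (f (g u)) = f u ∧ f (g u) ≠ u := by
    simpa only [NephewSol, not_or, not_not] using hsol
  have hu_per : u ∈ periodicPts f := level_eq_zero_iff.1 hu
  refine level_eq_succ (n := 1) ?_ fun hper => hfg ((bijOn_periodicPts f).injOn hper hu_per hffg)
  change f (f (g u)) ∈ periodicPts f
  rw [hffg]
  exact (bijOn_periodicPts f).mapsTo hu_per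
end
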